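/- arXiv:1403.1527 — 3 statements merged into one kernel-verified Lean document; each statement's English description precedes it below -/
import Mathlib

section
/- For each n ≥ 1, the set {C_α : α ⊨ n} of canonical quasisymmetric functions is a ℤ-basis of QSymⁿ, the ℤ-span of the fundamental quasisymmetric functions {F_α : α ⊨ n}; that is, the C_α are ℤ-linearly independent and their ℤ-span equals the ℤ-span of the F_α. -/
/-- Cell `(r,c)` (0-indexed: row `r` from the top, column `c` from the left) of the
reverse composition diagram of the composition `α`. -/
def IsCell (α : List ℕ) (r c : ℕ) : Prop := r < α.length ∧ c < α.getD r 0

instance (α : List ℕ) (r c : ℕ) : Decidable (IsCell α r c) :=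
  inferInstanceAs (Decidable (r < α.length ∧ c < α.getD r 0))

/-- A standard reverse composition tableau (SRCT) of shape `α`: a bijective filling of the
reverse composition diagram of `α` by `{1,…,α.sum}` (with the junk value `0` off the diagram)
whose rows decrease from left to right, whose first column increases from top to bottom,
and which satisfies the triple rule. -/
structure SRCT (α : List ℕ) where
  entry : ℕ → ℕ → ℕ
  zero_off : ∀ r c, ¬ IsCell α r c → entry r c = 0
  one_le : ∀ r c, IsCell α r c → 1 ≤ entry r c
  le_sum : ∀ r c, IsCell α r c → entry r c ≤ α.sum
  inj : ∀ r c r' c', IsCell α r c → IsCell α r' c' → entry r c = entry r' c' → r = r' ∧ c = c'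
  surj : ∀ m, 1 ≤ m → m ≤ α.sum → ∃ r c, IsCell α r c ∧ entry r c = m
  row_dec : ∀ r c, IsCell α r (c + 1) → entry r (c + 1) < entry r c
  col1_inc : ∀ r r', r < r' → IsCell α r 0 → IsCell α r' 0 → entry r 0 < entry r' 0
  triple : ∀ r r' c, r < r' → IsCell α r c → IsCell α r' (c + 1) →
    entry r' (c + 1) < entry r c → IsCell α r (c + 1) ∧ entry r' (c + 1) < entry r (c + 1)

/-- `i` is a descent of `T`: `i+1` appears weakly right of `i`. -/
def Descent (α : List ℕ) (T : SRCT α) (i : ℕ) : Prop :=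
  ∃ r c r' c', IsCell α r c ∧ IsCell α r' c' ∧
    T.entry r c = i ∧ T.entry r' c' = i + 1 ∧ c ≤ c'

/-- `i` and `i+1` are attacking in `T`: same column, or adjacent columns with `i+1`
strictly southeast of `i`. -/
def Attacking (α : List ℕ) (T : SRCT α) (i : ℕ) : Prop :=
  ∃ r c r' c', IsCell α r c ∧ IsCell α r' c' ∧
    T.entry r c = i ∧ T.entry r' c' = i + 1 ∧ (c' = c ∨ (c' = c + 1 ∧ r < r'))

/-- The entry function of the filling `s_i(T)` obtained from `T` by interchanging the
positions of the entries `i` and `i+1`. -/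
def swapEntry (α : List ℕ) (T : SRCT α) (i : ℕ) : ℕ → ℕ → ℕ := fun r c =>
  if T.entry r c = i then i + 1 else if T.entry r c = i + 1 then i else T.entry r c

/-- The entries in every column of `T` increase from top to bottom. -/
def ColIncreasing (α : List ℕ) (T : SRCT α) : Prop :=
  ∀ r r' c, r < r' → IsCell α r c → IsCell α r' c → T.entry r c < T.entry r' c

/-- The descent set of `T`. -/
def desSet (α : List ℕ) (T : SRCT α) : Set ℕ := {i | Descent α T i}

/-- The fundamental quasisymmetric function determined by the subset `S ⊆ [n-1]`
(`F_{comp(S)}`), as a formal power series in the commuting variables `x_0, x_1, x_2, …`: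
the sum of `x_{i_1} ⋯ x_{i_n}` over all `i_1 ≤ ⋯ ≤ i_n` with `i_j < i_{j+1}` whenever
`j ∈ S` (positions `1`-indexed). -/
noncomputable def FqsymSet (n : ℕ) (S : Set ℕ) : MvPowerSeries ℕ ℤ := fun d =>
  (Set.ncard {f : Fin n → ℕ |
    (∀ k l : Fin n, k ≤ l → f k ≤ f l) ∧
    (∀ k l : Fin n, (l : ℕ) = (k : ℕ) + 1 → ((k : ℕ) + 1) ∈ S → f k < f l) ∧
    (∀ j : ℕ, d j = Set.ncard {k : Fin n | f k = j})} : ℤ)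

/-- The compositions of `n`. -/
abbrev CompN (n : ℕ) : Type := {l : List ℕ // (∀ a ∈ l, 0 < a) ∧ l.sum = n}

/-- `set(α) ⊆ [n-1]` for a composition `α`: the proper partial sums of the parts. -/
def compSet (α : List ℕ) : Set ℕ := {s | ∃ k, 0 < k ∧ k < α.length ∧ s = (α.take k).sum}

/-- The canonical quasisymmetric function `C_α`: the sum of `F_{comp(τ)}` over all SRCTs `τ`
of shape `α` whose columns increase from top to bottom. -/
noncomputable def Cqsym (n : ℕ) (α : List ℕ) : MvPowerSeries ℕ ℤ :=
  ∑ᶠ T ∈ {T : SRCT α | ColIncreasing α T}, FqsymSet n (desSet α T)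

/-!
Subsets of `[n-1]` are compared through their tail counts `k ↦ #{s ∈ S | k ≤ s}`. In an SRCT `T`
of shape `α` the first-column entry of row `r` is at least `α₁ + ⋯ + α_{r+1}` (pigeonhole), and
between two consecutive first-column entries there is a descent; hence `des(T)` dominates
`set(α)`, with equality only for `τ_α`. So `C_α` is `F_α` plus a sum of `F_β` with `set(β)`
strictly dominating `set(α)`, and the span equality follows by downward induction along this
order. The coefficient of `x^γ = x₀^{γ₁} x₁^{γ₂} ⋯` in `F_S` is `1` if `S ⊆ set(γ)` and `0`
otherwise, so these coefficients are unitriangular against the `C_α` as well, which gives linear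
independence.
-/

open Finset

section Unitriangular

variable {ι R M : Type*} [Ring R] [AddCommGroup M] [Module R M] [Preorder ι]

lemma linearIndependent_of_unitriangular [WellFoundedLT ι] (v : ι → M) (φ : ι → M →ₗ[R] R)
    (hdiag : ∀ i, φ i (v i) = 1) (htri : ∀ i j, φ j (v i) ≠ 0 → i = j ∨ i < j) :
    LinearIndependent R v := by
  rw [linearIndependent_iff']
  intro s g hg i
  induction i using WellFoundedLT.induction with
  | _ i ih =>
  intro hi
  have := congrArg (φ i) hg
  rw [map_sum, map_zero, sum_eq_single_of_mem i hi fun j hj hji => ?_] at this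
  · simpa [hdiag] using this
  · rcases eq_or_ne (φ i (v j)) 0 with h | h
    · simp [h]
    · rcases htri j i h with rfl | hlt
      · exact absurd rfl hji
      · simp [ih j hlt hj]

lemma span_range_eq_of_unitriangular [WellFoundedGT ι] (C F : ι → M)
    (h : ∀ i, C i - F i ∈ Submodule.span R (F '' Set.Ioi i)) :
    Submodule.span R (Set.range C) = Submodule.span R (Set.range F) := by
  apply le_antisymm
  · rw [Submodule.span_le]
    rintro _ ⟨i, rfl⟩
    have := Submodule.span_mono (Set.image_subset_range F _) (h i)
    simpa using Submodule.add_mem _ this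
      (Submodule.subset_span (Set.mem_range_self i) : F i ∈ Submodule.span R (Set.range F))
  · rw [Submodule.span_le]
    rintro _ ⟨i, rfl⟩
    induction i using WellFoundedGT.induction with
    | _ i ih =>
    have hspan : Submodule.span R (F '' Set.Ioi i) ≤ Submodule.span R (Set.range C) :=
      Submodule.span_le.2 (by rintro _ ⟨j, hj, rfl⟩; exact ih j hj)
    simpa using Submodule.sub_mem _
      (Submodule.subset_span (Set.mem_range_self i) : C i ∈ Submodule.span R (Set.range C))
      (hspan (h i))

end Unitriangular

section TailCount

noncomputable def tailCount (S : Set ℕ) (k : ℕ) : ℕ∞ := {s ∈ S | k ≤ s}.encard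

lemma tailCount_mono : Monotone tailCount := fun _ _ h _ =>
  Set.encard_le_encard fun _ hs => ⟨h hs.1, hs.2⟩

lemma mem_iff_tailCount_succ_lt {S : Set ℕ} (hS : S.Finite) {k : ℕ} :
    k ∈ S ↔ tailCount S (k + 1) < tailCount S k := by
  constructor
  · intro hk
    refine (hS.subset (Set.sep_subset _ _)).encard_lt_encard
      ⟨fun s hs => ⟨hs.1, by have := hs.2; omega⟩, fun h => ?_⟩
    have := (h ⟨hk, le_rfl⟩).2
    omega
  · intro hlt
    by_contra hk
    refine hlt.ne (congrArg Set.encard (Set.ext fun s => ⟨fun hs => ⟨hs.1, by have := hs.2; omega⟩,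
      fun hs => ⟨hs.1, Nat.lt_of_le_of_ne hs.2 fun he => hk (he ▸ hs.1)⟩⟩))

lemma tailCount_injOn : Set.InjOn tailCount {S | S.Finite} := fun S hS S' hS' h =>
  Set.ext fun k => by rw [mem_iff_tailCount_succ_lt hS, mem_iff_tailCount_succ_lt hS', h]

lemma tailCount_image_le {ι : Type*} {A : Set ι} {g h : ι → ℕ} {S : Set ℕ} (hinj : Set.InjOn h A)
    (hmaps : Set.MapsTo h A S) (hle : ∀ a ∈ A, g a ≤ h a) : tailCount (g '' A) ≤ tailCount S :=
  fun k => calc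
    {s ∈ g '' A | k ≤ s}.encard ≤ (g '' {a ∈ A | k ≤ g a}).encard :=
      Set.encard_le_encard (by rintro _ ⟨⟨a, ha, rfl⟩, hk⟩; exact ⟨a, ⟨ha, hk⟩, rfl⟩)
    _ ≤ {a ∈ A | k ≤ g a}.encard := Set.encard_image_le _ _
    _ ≤ {s ∈ S | k ≤ s}.encard :=
      Set.encard_le_encard_of_injOn (fun a ha => ⟨hmaps ha.1, ha.2.trans (hle a ha.1)⟩)
        (hinj.mono (Set.sep_subset _ _))

end TailCount

def partialSum (α : List ℕ) (k : ℕ) : ℕ := (α.take k).sum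

section PartialSum

variable {α : List ℕ}

@[simp]
lemma partialSum_zero : partialSum α 0 = 0 := by simp [partialSum]

lemma partialSum_succ (k : ℕ) : partialSum α (k + 1) = partialSum α k + α.getD k 0 := by
  rcases lt_or_ge k α.length with h | h
  · rw [partialSum, partialSum, List.sum_take_succ _ _ h, List.getD_eq_getElem _ _ h]
  · rw [partialSum, partialSum, List.take_of_length_le h, List.take_of_length_le (by omega),
      List.getD_eq_default _ _ h, add_zero]

lemma partialSum_mono : Monotone (partialSum α) := List.monotone_sum_take α

lemma partialSum_of_length_le {k : ℕ} (h : α.length ≤ k) : partialSum α k = α.sum := by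
  rw [partialSum, List.take_of_length_le h]

lemma partialSum_le_sum (k : ℕ) : partialSum α k ≤ α.sum :=
  (partialSum_mono (le_max_left k α.length)).trans (partialSum_of_length_le (le_max_right _ _)).le

lemma exists_partialSum_lt_le {m : ℕ} (h0 : 0 < m) (hm : m ≤ α.sum) :
    ∃ r, partialSum α r < m ∧ m ≤ partialSum α (r + 1) := by
  have hex : ∃ k, m ≤ partialSum α k := ⟨α.length, (partialSum_of_length_le le_rfl).symm ▸ hm⟩
  obtain ⟨r, hr⟩ : ∃ r, Nat.find hex = r + 1 :=
    Nat.exists_eq_succ_of_ne_zero fun h => by have := h ▸ Nat.find_spec hex; simp at this; omega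
  exact ⟨r, not_le.1 (Nat.find_min hex (by omega)), hr ▸ Nat.find_spec hex⟩

lemma mem_compSet {s : ℕ} : s ∈ compSet α ↔ ∃ k, 0 < k ∧ k < α.length ∧ s = partialSum α k :=
  Iff.rfl

lemma mem_compSet_iff_exists_partialSum_eq {s : ℕ} (h0 : 0 < s) (hs : s < α.sum) :
    s ∈ compSet α ↔ ∃ j, partialSum α j = s := by
  refine ⟨fun ⟨k, _, _, hk⟩ => ⟨k, hk.symm⟩, fun ⟨j, hj⟩ => ⟨j, Nat.pos_of_ne_zero ?_, ?_, hj.symm⟩⟩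
  · rintro rfl; simp at hj; omega
  · exact not_le.1 fun hl => by rw [partialSum_of_length_le hl] at hj; omega

lemma compSet_eq_image : compSet α = partialSum α '' Set.Ioo 0 α.length :=
  Set.ext fun _ => ⟨fun ⟨k, h0, hk, hs⟩ => ⟨k, ⟨h0, hk⟩, hs.symm⟩,
    fun ⟨k, ⟨h0, hk⟩, hs⟩ => ⟨k, h0, hk, hs.symm⟩⟩

lemma finite_compSet : (compSet α).Finite :=
  compSet_eq_image ▸ (Set.finite_Ioo _ _).image _

end PartialSum

def cellsAbove (α : List ℕ) (j : ℕ) : Finset (ℕ × ℕ) :=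
  (range j).biUnion fun r => {r} ×ˢ range (α.getD r 0)

section Cells

variable {α : List ℕ}

lemma IsCell.mono_col {r c c' : ℕ} (h : IsCell α r c) (hc : c' ≤ c) : IsCell α r c' :=
  ⟨h.1, lt_of_le_of_lt hc h.2⟩

lemma isCell_zero (hα : ∀ a ∈ α, 0 < a) {r : ℕ} (hr : r < α.length) : IsCell α r 0 :=
  ⟨hr, by rw [List.getD_eq_getElem _ _ hr]; exact hα _ (List.getElem_mem hr)⟩

lemma partialSum_add_lt_of_isCell {r c : ℕ} (h : IsCell α r c) :
    partialSum α r + c < partialSum α (r + 1) := by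
  rw [partialSum_succ]; exact Nat.add_lt_add_left h.2 _

lemma partialSum_succ_sub_lt {r c r' c' : ℕ} (h' : IsCell α r' c') (hr : r < r') :
    partialSum α (r + 1) - c < partialSum α (r' + 1) - c' := by
  have : partialSum α (r + 1) ≤ partialSum α r' := partialSum_mono hr
  have := partialSum_add_lt_of_isCell h'
  omega

lemma mem_cellsAbove {j : ℕ} {p : ℕ × ℕ} : p ∈ cellsAbove α j ↔ p.1 < j ∧ IsCell α p.1 p.2 := by
  obtain ⟨r, c⟩ := p
  simp only [cellsAbove, mem_biUnion, mem_range, mem_product, mem_singleton, IsCell]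
  constructor
  · rintro ⟨r, hr, rfl, hc⟩
    refine ⟨hr, ?_, hc⟩
    by_contra h
    rw [List.getD_eq_default _ _ (not_lt.1 h)] at hc
    omega
  · rintro ⟨hr, -, hc⟩
    exact ⟨r, hr, rfl, hc⟩

lemma card_cellsAbove (j : ℕ) : #(cellsAbove α j) = partialSum α j := by
  induction j with
  | zero => simp [cellsAbove]
  | succ j ih =>
    rw [cellsAbove, range_add_one, biUnion_insert, card_union_of_disjoint, ← cellsAbove, ih,
      card_product, card_singleton, card_range, one_mul, add_comm, partialSum_succ]
    rw [disjoint_left]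
    rintro ⟨r, c⟩ h h'
    simp only [mem_product, mem_singleton] at h
    exact (lt_irrefl j) (h.1 ▸ (mem_cellsAbove.1 h').1)

end Cells

namespace SRCT

variable {α : List ℕ}

lemma ext {T T' : SRCT α} (h : T.entry = T'.entry) : T = T' := by
  cases T; cases T'; cases h; rfl

lemma entry_le_sum (T : SRCT α) (r c : ℕ) : T.entry r c ≤ α.sum := by
  by_cases h : IsCell α r c
  · exact T.le_sum r c h
  · rw [T.zero_off r c h]; exact Nat.zero_le _

instance : Finite (SRCT α) := by
  refine Finite.of_injective
    (fun (T : SRCT α) (p : Fin α.length × Fin (α.sum + 1)) =>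
      (⟨T.entry p.1 p.2, Nat.lt_succ_of_le (T.entry_le_sum _ _)⟩ : Fin (α.sum + 1))) ?_
  intro T T' h
  refine ext (funext₂ fun r c => ?_)
  by_cases hc : IsCell α r c
  · have hcs : c < α.sum + 1 := by
      have := partialSum_add_lt_of_isCell hc
      have := partialSum_le_sum (α := α) (r + 1)
      omega
    exact congrArg Fin.val (congrFun h (⟨r, hc.1⟩, ⟨c, hcs⟩))
  · rw [T.zero_off r c hc, T'.zero_off r c hc]

variable (T : SRCT α)

lemma entry_add_le_entry_zero {r c : ℕ} (h : IsCell α r c) : T.entry r c + c ≤ T.entry r 0 := by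
  induction c with
  | zero => rfl
  | succ c ih =>
    have := T.row_dec r c h
    have := ih (h.mono_col c.le_succ)
    omega

lemma entry_zero_le_entry_zero {r r' : ℕ} (hr : r ≤ r') (h : IsCell α r 0) (h' : IsCell α r' 0) :
    T.entry r 0 ≤ T.entry r' 0 := by
  rcases hr.lt_or_eq with hr | rfl
  · exact (T.col1_inc r r' hr h h').le
  · rfl

/-- The `partialSum α (r + 1)` cells in the rows `0, …, r` carry distinct entries, all at most
`T.entry r 0`. -/
lemma partialSum_succ_le_entry_zero {r : ℕ} (h : IsCell α r 0) :
    partialSum α (r + 1) ≤ T.entry r 0 := by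
  have hinj : Set.InjOn (fun p : ℕ × ℕ => T.entry p.1 p.2) (cellsAbove α (r + 1)) :=
    fun p hp q hq hpq => by
      obtain ⟨h1, h2⟩ := T.inj _ _ _ _ (mem_cellsAbove.1 hp).2 (mem_cellsAbove.1 hq).2 hpq
      exact Prod.ext h1 h2
  have hmaps : ∀ p ∈ cellsAbove α (r + 1), T.entry p.1 p.2 ∈ Icc 1 (T.entry r 0) := by
    intro p hp
    obtain ⟨hpr, hp⟩ := mem_cellsAbove.1 hp
    have := T.entry_add_le_entry_zero hp
    have := T.entry_zero_le_entry_zero (Nat.lt_succ_iff.1 hpr) (hp.mono_col (Nat.zero_le _)) h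
    exact mem_Icc.2 ⟨T.one_le _ _ hp, by omega⟩
  simpa [card_cellsAbove] using card_le_card_of_injOn _ hmaps hinj

lemma exists_cell_add_le_of_forall_not_descent {r c m : ℕ} (h : IsCell α r c)
    (hm : T.entry r c + m ≤ α.sum)
    (hnd : ∀ i ∈ Set.Ico (T.entry r c) (T.entry r c + m), ¬ Descent α T i) :
    ∃ r' c', IsCell α r' c' ∧ T.entry r' c' = T.entry r c + m ∧ c' + m ≤ c := by
  induction m with
  | zero => exact ⟨r, c, h, rfl, le_rfl⟩
  | succ m ih =>
    obtain ⟨r', c', h', he', hc'⟩ :=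
      ih (by omega) fun i hi => hnd i ⟨hi.1, by have := hi.2; omega⟩
    obtain ⟨r'', c'', h'', he''⟩ := T.surj (T.entry r c + (m + 1)) (by omega) hm
    have hlt : c'' < c' := not_le.1 fun hle =>
      hnd _ ⟨Nat.le_add_right _ _, by omega⟩ ⟨r', c', r'', c'', h', h'', he', he'', hle⟩
    exact ⟨r'', c'', h'', he'', by omega⟩

lemma exists_descent_mem_Ico {r r' : ℕ} (hr : r < r') (h : IsCell α r 0) (h' : IsCell α r' 0) :
    ∃ i ∈ Set.Ico (T.entry r 0) (T.entry r' 0), Descent α T i := by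
  by_contra! hnd
  have hlt := T.col1_inc r r' hr h h'
  obtain ⟨_, c, -, -, hc⟩ := T.exists_cell_add_le_of_forall_not_descent h
    (m := T.entry r' 0 - T.entry r 0) (by have := T.le_sum r' 0 h'; omega)
    fun i hi => hnd i ⟨hi.1, by have := hi.2; omega⟩
  omega

lemma desSet_subset_Ioo : desSet α T ⊆ Set.Ioo 0 α.sum := by
  rintro i ⟨r, c, r', c', h, h', rfl, he', -⟩
  exact ⟨T.one_le r c h, by have := T.le_sum r' c' h'; omega⟩

lemma sum_entry_cellsAbove_length :
    ∑ p ∈ cellsAbove α α.length, T.entry p.1 p.2 = ∑ v ∈ Icc 1 α.sum, v := by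
  refine sum_nbij (fun p => T.entry p.1 p.2) (fun p hp => ?_) (fun p hp q hq hpq => ?_)
    (fun v hv => ?_) fun _ _ => rfl
  · have hp := (mem_cellsAbove.1 hp).2
    exact mem_Icc.2 ⟨T.one_le _ _ hp, T.le_sum _ _ hp⟩
  · obtain ⟨h1, h2⟩ := T.inj _ _ _ _ (mem_cellsAbove.1 hp).2 (mem_cellsAbove.1 hq).2 hpq
    exact Prod.ext h1 h2
  · obtain ⟨r, c, h, he⟩ := T.surj v (mem_Icc.1 hv).1 (mem_Icc.1 hv).2
    exact ⟨(r, c), mem_cellsAbove.2 ⟨h.1, h⟩, he⟩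

/-- Both fillings use each of `1, …, α.sum` once, so their entry sums agree. -/
lemma ext_of_entry_le {T T' : SRCT α} (hle : ∀ r c, IsCell α r c → T.entry r c ≤ T'.entry r c) :
    T = T' := by
  have heq := (sum_eq_sum_iff_of_le fun p hp => hle p.1 p.2 (mem_cellsAbove.1 hp).2).1
    (T.sum_entry_cellsAbove_length.trans T'.sum_entry_cellsAbove_length.symm)
  refine ext (funext₂ fun r c => ?_)
  by_cases h : IsCell α r c
  · exact heq (r, c) (mem_cellsAbove.2 ⟨h.1, h⟩)
  · rw [T.zero_off r c h, T'.zero_off r c h]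

end SRCT

/-- The tableau `τ_α`, filled row by row with consecutive entries decreasing along each row. -/
def SRCT.canonical (α : List ℕ) : SRCT α where
  entry r c := if IsCell α r c then partialSum α (r + 1) - c else 0
  zero_off r c h := if_neg h
  one_le r c h := by
    rw [if_pos h]; have := partialSum_add_lt_of_isCell h; omega
  le_sum r c h := by
    rw [if_pos h]; exact (Nat.sub_le _ _).trans (partialSum_le_sum _)
  inj r c r' c' h h' he := by
    rw [if_pos h, if_pos h'] at he
    rcases lt_trichotomy r r' with hr | rfl | hr
    · exact absurd he (partialSum_succ_sub_lt h' hr).ne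
    · have := partialSum_add_lt_of_isCell h
      have := partialSum_add_lt_of_isCell h'
      exact ⟨rfl, by omega⟩
    · exact absurd he (partialSum_succ_sub_lt h hr).ne'
  surj m h1 h2 := by
    obtain ⟨r, hr, hr'⟩ := exists_partialSum_lt_le h1 h2
    have hlen : r < α.length := not_le.1 fun hle => by
      rw [partialSum_of_length_le hle] at hr; omega
    have hcell : IsCell α r (partialSum α (r + 1) - m) := by
      refine ⟨hlen, ?_⟩
      have := partialSum_succ (α := α) r
      omega
    exact ⟨r, _, hcell, by rw [if_pos hcell]; omega⟩
  row_dec r c h := by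
    rw [if_pos h, if_pos (h.mono_col c.le_succ)]
    have := partialSum_add_lt_of_isCell h
    omega
  col1_inc r r' hr h h' := by
    rw [if_pos h, if_pos h']; exact partialSum_succ_sub_lt h' hr
  triple r r' c hr h h' hlt := by
    rw [if_pos h, if_pos h'] at hlt; exact absurd hlt (partialSum_succ_sub_lt h' hr).not_gt

namespace SRCT

variable {α : List ℕ}

lemma canonical_entry {r c : ℕ} (h : IsCell α r c) :
    (canonical α).entry r c = partialSum α (r + 1) - c :=
  if_pos h

lemma colIncreasing_canonical : ColIncreasing α (canonical α) := fun r r' c hr h h' => by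
  rw [canonical_entry h, canonical_entry h']; exact partialSum_succ_sub_lt h' hr

variable (hα : ∀ a ∈ α, 0 < a)
include hα

lemma desSet_canonical : desSet α (canonical α) = compSet α := by
  ext i
  constructor
  · rintro ⟨r, c, r', c', h, h', hi, hi', hle⟩
    rw [canonical_entry h] at hi
    rw [canonical_entry h'] at hi'
    have := partialSum_add_lt_of_isCell h
    have := partialSum_add_lt_of_isCell h'
    rcases lt_trichotomy r r' with hr | rfl | hr
    · have : partialSum α (r + 1) ≤ partialSum α r' := partialSum_mono hr
      exact mem_compSet.2 ⟨r + 1, r.succ_pos, lt_of_le_of_lt hr h'.1, by omega⟩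
    · omega
    · have : partialSum α (r' + 1) ≤ partialSum α r := partialSum_mono hr
      omega
  · intro hi
    obtain ⟨_ | j, hj0, hj, rfl⟩ := mem_compSet.1 hi
    · omega
    have h0 : IsCell α j 0 := isCell_zero hα (by omega)
    have hpos := (isCell_zero hα hj).2
    have h' : IsCell α (j + 1) (α.getD (j + 1) 0 - 1) := ⟨hj, by omega⟩
    refine ⟨j, 0, j + 1, _, h0, h', canonical_entry h0, ?_, Nat.zero_le _⟩
    rw [canonical_entry h', partialSum_succ (j + 1)]
    omega

variable (T : SRCT α)

/-- Between the first-column entries of rows `j - 1` and `j` there is a descent, and it is at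
least `partialSum α j`. -/
lemma tailCount_compSet_le_desSet : tailCount (compSet α) ≤ tailCount (desSet α T) := by
  have hex : ∀ j ∈ Set.Ioo 0 α.length,
      ∃ i ∈ Set.Ico (T.entry (j - 1) 0) (T.entry j 0), Descent α T i := fun j ⟨hj0, hj⟩ =>
    T.exists_descent_mem_Ico (by omega) (isCell_zero hα (by omega)) (isCell_zero hα hj)
  choose! d hd hdes using hex
  rw [compSet_eq_image]
  refine tailCount_image_le (StrictMonoOn.injOn fun j hj j' hj' hjj' => ?_) hdes fun j hj => ?_
  · have := hj'.2
    calc d j < T.entry j 0 := (hd j hj).2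
      _ ≤ T.entry (j' - 1) 0 :=
        T.entry_zero_le_entry_zero (by omega) (isCell_zero hα hj.2) (isCell_zero hα (by omega))
      _ ≤ d j' := (hd j' hj').1
  · have := T.partialSum_succ_le_entry_zero (isCell_zero hα (r := j - 1) (by have := hj.2; omega))
    rw [Nat.sub_add_cancel hj.1] at this
    exact this.trans (hd j hj).1

lemma desSet_eq_compSet_of_subset (h : desSet α T ⊆ compSet α) : desSet α T = compSet α :=
  tailCount_injOn ((Set.finite_Ioo 0 α.sum).subset T.desSet_subset_Ioo) finite_compSet
    ((tailCount_mono h).antisymm (T.tailCount_compSet_le_desSet hα))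

/-- Each interval between consecutive first-column entries contains a descent, which must be a
partial sum; going up from the last row this pins the first column down. -/
lemma entry_zero_eq_of_desSet_eq (hdes : desSet α T = compSet α) {r : ℕ} (hr : r < α.length) :
    T.entry r 0 = partialSum α (r + 1) := by
  have hlow := T.partialSum_succ_le_entry_zero (isCell_zero hα hr)
  obtain ⟨k, hk⟩ : ∃ k, r + k + 1 = α.length := ⟨α.length - r - 1, by omega⟩
  induction k generalizing r with
  | zero =>
    have := T.le_sum r 0 (isCell_zero hα hr)
    rw [partialSum_of_length_le (by omega)] at hlow ⊢
    omega
  | succ k ih =>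
    have hnext := ih (r := r + 1) (by omega)
      (T.partialSum_succ_le_entry_zero (isCell_zero hα (by omega))) (by omega)
    obtain ⟨i, hi, hides⟩ :=
      T.exists_descent_mem_Ico (lt_add_one r) (isCell_zero hα hr) (isCell_zero hα (by omega))
    obtain ⟨m, -, -, rfl⟩ := mem_compSet.1 (hdes ▸ hides : i ∈ compSet α)
    have hm : m ≤ r + 1 := not_lt.1 fun hm => by
      have : partialSum α (r + 1 + 1) ≤ partialSum α m := partialSum_mono hm
      have := hi.2
      omega
    have : partialSum α m ≤ partialSum α (r + 1) := partialSum_mono hm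
    have := hi.1
    omega

lemma eq_canonical_of_desSet_eq (hdes : desSet α T = compSet α) : T = canonical α :=
  ext_of_entry_le fun r c h => by
    have := T.entry_add_le_entry_zero h
    rw [T.entry_zero_eq_of_desSet_eq hα hdes h.1] at this
    rw [canonical_entry h]
    omega

end SRCT

section Compositions

variable {n : ℕ}

def compNEquiv (n : ℕ) : CompN n ≃ Composition n where
  toFun α := ⟨α.1, fun h => α.2.1 _ h, α.2.2⟩
  invFun c := ⟨c.blocks, fun _ h => c.blocks_pos h, c.blocks_sum⟩
  left_inv _ := rfl
  right_inv _ := rfl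

instance : Finite (CompN n) := Finite.of_equiv _ (compNEquiv n).symm

lemma compSet_blocks (c : Composition n) :
    compSet c.blocks = Fin.val '' (c.boundaries : Set (Fin (n + 1))) \ {0, n} := by
  have hsize : ∀ k, partialSum c.blocks k = c.sizeUpTo k := fun _ => rfl
  have hzero := c.sizeUpTo_zero
  have hlength := c.sizeUpTo_length
  have hlen : c.length = c.blocks.length := rfl
  ext s
  simp only [mem_compSet, Set.mem_sdiff, Set.mem_image, Finset.mem_coe, Composition.boundaries,
    Finset.mem_map, Finset.mem_univ, true_and, Set.mem_insert_iff, Set.mem_singleton_iff,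
    RelEmbedding.coe_toEmbedding, exists_exists_eq_and, hsize]
  constructor
  · rintro ⟨k, hk0, hk, rfl⟩
    have h1 : c.sizeUpTo 0 < c.sizeUpTo 1 := c.sizeUpTo_strict_mono (by omega)
    have h2 : c.sizeUpTo 1 ≤ c.sizeUpTo k := c.monotone_sizeUpTo hk0
    have h3 := c.sizeUpTo_strict_mono hk
    have h4 : c.sizeUpTo (k + 1) ≤ c.sizeUpTo c.length := c.monotone_sizeUpTo hk
    exact ⟨⟨⟨k, by omega⟩, rfl⟩, by omega⟩
  · rintro ⟨⟨k, rfl⟩, hs⟩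
    refine ⟨k, Nat.pos_of_ne_zero fun h => ?_,
      lt_of_le_of_ne (Nat.lt_succ_iff.1 k.2) fun h => ?_, rfl⟩
    · exact hs (Or.inl (by simp [Composition.boundary, h]))
    · exact hs (Or.inr (by simp [Composition.boundary, h]))

lemma mem_boundaries_iff_mem_compSet (c : Composition n) {i : Fin (n + 1)} (h0 : i ≠ 0)
    (hn : i ≠ Fin.last n) : i ∈ c.boundaries ↔ (i : ℕ) ∈ compSet c.blocks := by
  have h0' : (i : ℕ) ≠ 0 := fun h => h0 (Fin.ext h)
  have hn' : (i : ℕ) ≠ n := fun h => hn (Fin.ext h)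
  rw [compSet_blocks, Set.mem_sdiff, Fin.val_injective.mem_set_image]
  simp [h0', hn']

lemma compSet_blocks_injective : Function.Injective fun c : Composition n => compSet c.blocks := by
  intro c c' h
  refine (compositionEquiv n).injective (CompositionAsSet.ext (Finset.ext fun i => ?_))
  change i ∈ c.boundaries ↔ i ∈ c'.boundaries
  rcases eq_or_ne i 0 with rfl | h0
  · exact iff_of_true c.toCompositionAsSet.zero_mem c'.toCompositionAsSet.zero_mem
  rcases eq_or_ne i (Fin.last n) with rfl | hn
  · exact iff_of_true c.toCompositionAsSet.getLast_mem c'.toCompositionAsSet.getLast_mem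
  rw [mem_boundaries_iff_mem_compSet c h0 hn, mem_boundaries_iff_mem_compSet c' h0 hn]
  exact Iff.of_eq (congrArg ((i : ℕ) ∈ ·) h)

lemma compSet_injective : Function.Injective fun α : CompN n => compSet α.1 :=
  compSet_blocks_injective.comp (compNEquiv n).injective

lemma exists_compSet_eq {S : Set ℕ} (hS : S ⊆ Set.Ioo 0 n) : ∃ α : CompN n, compSet α.1 = S := by
  classical
  let d : CompositionAsSet n :=
    ⟨univ.filter fun i => i = 0 ∨ i = Fin.last n ∨ (i : ℕ) ∈ S, by simp, by simp⟩
  refine ⟨(compNEquiv n).symm d.toComposition, ?_⟩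
  change compSet d.toComposition.blocks = S
  rw [compSet_blocks, d.toComposition_boundaries]
  ext s
  simp only [d, Set.mem_sdiff, Set.mem_image, Finset.coe_filter, Finset.mem_univ, true_and,
    Set.mem_ofPred_eq, Set.mem_insert_iff, Set.mem_singleton_iff]
  constructor
  · rintro ⟨⟨i, hi, rfl⟩, hs⟩
    rcases hi with rfl | rfl | hi
    · simp at hs
    · simp at hs
    · exact hi
  · intro hs
    obtain ⟨h0, hn⟩ := hS hs
    exact ⟨⟨⟨s, by omega⟩, Or.inr (Or.inr hs), rfl⟩, by omega⟩

end Compositions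

section Words

variable {n : ℕ}

lemma mem_iff_lt_card_of_isLowerSet {s : Finset (Fin n)} (hs : IsLowerSet (s : Set (Fin n)))
    (k : Fin n) : k ∈ s ↔ (k : ℕ) < #s := by
  constructor
  · intro hk
    have := card_le_card fun x hx => hs (mem_Iic.1 hx) hk
    rw [Fin.card_Iic] at this
    omega
  · intro hk
    by_contra hks
    have := card_le_card fun x (hx : x ∈ s) => mem_Iio.2 (lt_of_not_ge fun hkx => hks (hs hkx hx))
    rw [Fin.card_Iio] at this
    omega

variable {α : List ℕ} {f : Fin n → ℕ}

lemma lt_iff_lt_partialSum_of_monotone (hf : Monotone f)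
    (hmult : ∀ j, α.toFinsupp j = {k | f k = j}.ncard) (k : Fin n) (j : ℕ) :
    f k < j ↔ (k : ℕ) < partialSum α j := by
  classical
  have hcard : ∀ j, #{k | f k < j} = partialSum α j := by
    intro j
    induction j with
    | zero => simp
    | succ j ih =>
      rw [partialSum_succ, ← ih, ← List.toFinsupp_apply, hmult j, Set.ncard_eq_toFinset_card',
        Set.toFinset_ofPred, ← card_union_of_disjoint (disjoint_filter.2 fun k _ h1 h2 => by omega)]
      congr 1
      ext k
      simp only [mem_filter, mem_union, mem_univ, true_and]
      omega
  have hlower : IsLowerSet ((univ.filter fun k => f k < j : Finset (Fin n)) : Set (Fin n)) :=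
    fun a b hba ha => by
      simp only [coe_filter, mem_univ, true_and, Set.mem_ofPred_eq] at ha ⊢
      exact (hf hba).trans_lt ha
  rw [← hcard j, ← mem_iff_lt_card_of_isLowerSet hlower]
  simp

lemma monotone_of_lt_iff {s : ℕ → ℕ} (hf : ∀ k j, f k < j ↔ (k : ℕ) < s j) : Monotone f :=
  fun k l hkl => not_lt.1 fun h => lt_irrefl _ ((hf k (f k)).2 (lt_of_le_of_lt hkl ((hf l _).1 h)))

lemma lt_iff_exists_partialSum_eq (hf : ∀ k j, f k < j ↔ (k : ℕ) < partialSum α j)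
    {k l : Fin n} (hkl : (l : ℕ) = k + 1) : f k < f l ↔ ∃ j, partialSum α j = l := by
  constructor
  · intro h
    have h1 := (hf k (f l)).1 h
    have h2 := (hf l (f l)).not.1 (lt_irrefl _)
    exact ⟨f l, by omega⟩
  · rintro ⟨j, hj⟩
    have h1 := (hf k j).2 (by omega)
    have h2 : ¬ f l < j := fun h => by have := (hf l j).1 h; omega
    omega

namespace Composition

variable (c : Composition n)

lemma index_lt_iff (k : Fin n) (j : ℕ) : (c.index k : ℕ) < j ↔ (k : ℕ) < c.sizeUpTo j := by
  constructor
  · intro h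
    exact (c.lt_sizeUpTo_index_succ k).trans_le (c.monotone_sizeUpTo h)
  · intro h
    by_contra hj
    exact not_le.2 h ((c.monotone_sizeUpTo (not_lt.1 hj)).trans (c.sizeUpTo_index_le k))

lemma ncard_index_eq (j : ℕ) : {k : Fin n | (c.index k : ℕ) = j}.ncard = c.blocks.getD j 0 := by
  rcases lt_or_ge j c.length with hj | hj
  · have : {k : Fin n | (c.index k : ℕ) = j} = Set.range (c.embedding ⟨j, hj⟩) := by
      ext k
      rw [Set.mem_ofPred_eq, c.mem_range_embedding_iff', Fin.ext_iff, eq_comm]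
    rw [this, Set.ncard_range_of_injective (c.embedding _).injective, Nat.card_eq_fintype_card,
      Fintype.card_fin, List.getD_eq_getElem _ _ hj]
    rfl
  · have : {k : Fin n | (c.index k : ℕ) = j} = ∅ :=
      Set.eq_empty_of_forall_notMem fun k hk => by have := (c.index k).2; simp at hk; omega
    rw [this, Set.ncard_empty, List.getD_eq_default _ _ hj]

lemma monotone_and_ncard_eq_iff_eq_index (f : Fin n → ℕ) :
    (Monotone f ∧ ∀ j, c.blocks.toFinsupp j = {k | f k = j}.ncard) ↔
      f = fun k => (c.index k : ℕ) := by
  refine ⟨fun ⟨hf, hmult⟩ => funext fun k => eq_of_forall_gt_iff fun j =>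
    (lt_iff_lt_partialSum_of_monotone hf hmult k j).trans (c.index_lt_iff k j).symm, ?_⟩
  rintro rfl
  refine ⟨monotone_of_lt_iff c.index_lt_iff, fun j => ?_⟩
  rw [List.toFinsupp_apply, c.ncard_index_eq]

lemma forall_index_lt_iff_subset_compSet {S : Set ℕ} (hS : S ⊆ Set.Ioo 0 n) :
    (∀ k l : Fin n, (l : ℕ) = k + 1 → (k : ℕ) + 1 ∈ S → (c.index k : ℕ) < c.index l) ↔
      S ⊆ compSet c.blocks := by
  have hsum : c.blocks.sum = n := c.blocks_sum
  constructor
  · intro h s hs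
    obtain ⟨h0, hn⟩ := hS hs
    rw [mem_compSet_iff_exists_partialSum_eq h0 (by omega)]
    have hkl : ((⟨s, hn⟩ : Fin n) : ℕ) = (⟨s - 1, by omega⟩ : Fin n) + 1 := by simp; omega
    exact (lt_iff_exists_partialSum_eq c.index_lt_iff hkl).1 (h _ _ hkl (by rw [← hkl]; exact hs))
  · intro h k l hkl hk
    have hl := l.2
    rw [lt_iff_exists_partialSum_eq c.index_lt_iff hkl, hkl,
      ← mem_compSet_iff_exists_partialSum_eq (Nat.succ_pos _) (by omega)]
    exact h hk

end Composition

open Classical in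
/-- The only weakly increasing word of content `c` is `0^{c₀} 1^{c₁} ⋯`, and it increases
strictly exactly at the partial sums of `c`. -/
lemma coeff_FqsymSet (c : Composition n) {S : Set ℕ} (hS : S ⊆ Set.Ioo 0 n) :
    MvPowerSeries.coeff c.blocks.toFinsupp (FqsymSet n S) =
      if S ⊆ compSet c.blocks then 1 else 0 := by
  have hset : {f : Fin n → ℕ | (∀ k l : Fin n, k ≤ l → f k ≤ f l) ∧
      (∀ k l : Fin n, (l : ℕ) = (k : ℕ) + 1 → ((k : ℕ) + 1) ∈ S → f k < f l) ∧
      (∀ j : ℕ, c.blocks.toFinsupp j = Set.ncard {k : Fin n | f k = j})} =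
      {f | f = (fun k => (c.index k : ℕ)) ∧ S ⊆ compSet c.blocks} := by
    ext f
    constructor
    · rintro ⟨hf, hstrict, hmult⟩
      obtain rfl := (c.monotone_and_ncard_eq_iff_eq_index f).1 ⟨hf, hmult⟩
      exact ⟨rfl, (c.forall_index_lt_iff_subset_compSet hS).1 hstrict⟩
    · rintro ⟨rfl, hsub⟩
      obtain ⟨hf, hmult⟩ := (c.monotone_and_ncard_eq_iff_eq_index _).2 rfl
      exact ⟨hf, (c.forall_index_lt_iff_subset_compSet hS).2 hsub, hmult⟩
  rw [MvPowerSeries.coeff_apply, FqsymSet, hset]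
  by_cases h : S ⊆ compSet c.blocks <;> simp [h]

end Words

section Triangularity

variable {n : ℕ}

noncomputable def colIncreasingTableaux (α : List ℕ) : Finset (SRCT α) :=
  (Set.toFinite {T : SRCT α | ColIncreasing α T}).toFinset

lemma Cqsym_eq_sum (α : List ℕ) :
    Cqsym n α = ∑ T ∈ colIncreasingTableaux α, FqsymSet n (desSet α T) :=
  finsum_mem_eq_finite_toFinset_sum _ _

lemma canonical_mem_colIncreasingTableaux (α : List ℕ) :
    SRCT.canonical α ∈ colIncreasingTableaux α :=
  (Set.Finite.mem_toFinset _).2 SRCT.colIncreasing_canonical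

open Classical in
lemma coeff_Cqsym (α γ : CompN n) :
    MvPowerSeries.coeff γ.1.toFinsupp (Cqsym n α.1) =
      #{T ∈ colIncreasingTableaux α.1 | desSet α.1 T ⊆ compSet γ.1} := by
  rw [Cqsym_eq_sum, map_sum, ← sum_boole]
  exact sum_congr rfl fun T _ => coeff_FqsymSet (compNEquiv n γ)
    (T.desSet_subset_Ioo.trans (Set.Ioo_subset_Ioo_right α.2.2.le))

lemma coeff_Cqsym_self (α : CompN n) : MvPowerSeries.coeff α.1.toFinsupp (Cqsym n α.1) = 1 := by
  classical
  have : {T ∈ colIncreasingTableaux α.1 | desSet α.1 T ⊆ compSet α.1} = {SRCT.canonical α.1} := by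
    ext T
    simp only [mem_filter, mem_singleton]
    constructor
    · rintro ⟨-, h⟩
      exact T.eq_canonical_of_desSet_eq α.2.1 (T.desSet_eq_compSet_of_subset α.2.1 h)
    · rintro rfl
      exact ⟨canonical_mem_colIncreasingTableaux _, (SRCT.desSet_canonical α.2.1).le⟩
  rw [coeff_Cqsym, this, card_singleton, Nat.cast_one]

lemma coeff_Cqsym_ne_zero {α γ : CompN n}
    (h : MvPowerSeries.coeff γ.1.toFinsupp (Cqsym n α.1) ≠ 0) :
    α = γ ∨ tailCount (compSet α.1) < tailCount (compSet γ.1) := by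
  classical
  rw [coeff_Cqsym, Nat.cast_ne_zero, card_ne_zero] at h
  obtain ⟨T, hT⟩ := h
  rcases eq_or_ne α γ with rfl | hne
  · exact Or.inl rfl
  refine Or.inr (lt_of_le_of_ne ((T.tailCount_compSet_le_desSet α.2.1).trans
    (tailCount_mono (mem_filter.1 hT).2)) fun heq => hne (compSet_injective ?_))
  exact tailCount_injOn finite_compSet finite_compSet heq

lemma Cqsym_sub_mem_span (α : CompN n) :
    Cqsym n α.1 - FqsymSet n (compSet α.1) ∈ Submodule.span ℤ
      ((fun β : CompN n => FqsymSet n (compSet β.1)) ''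
        {β | tailCount (compSet α.1) < tailCount (compSet β.1)}) := by
  classical
  rw [Cqsym_eq_sum, ← add_sum_erase _ _ (canonical_mem_colIncreasingTableaux _),
    SRCT.desSet_canonical α.2.1, add_sub_cancel_left]
  refine Submodule.sum_mem _ fun T hT => Submodule.subset_span ?_
  obtain ⟨β, hβ⟩ :=
    exists_compSet_eq (T.desSet_subset_Ioo.trans (Set.Ioo_subset_Ioo_right α.2.2.le))
  refine ⟨β, lt_of_le_of_ne (hβ ▸ T.tailCount_compSet_le_desSet α.2.1) fun heq => ?_,
    congrArg (FqsymSet n) hβ⟩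
  refine (mem_erase.1 hT).1 (T.eq_canonical_of_desSet_eq α.2.1 ?_)
  exact hβ ▸ (tailCount_injOn finite_compSet finite_compSet heq).symm

end Triangularity

theorem canonical_basis_general (n : ℕ) :
    LinearIndependent ℤ (fun α : CompN n => Cqsym n α.1) ∧
    Submodule.span ℤ (Set.range fun α : CompN n => Cqsym n α.1) =
      Submodule.span ℤ (Set.range fun α : CompN n => FqsymSet n (compSet α.1)) := by
  let _ : Preorder (CompN n) := Preorder.lift fun α => tailCount (compSet α.1)
  exact ⟨linearIndependent_of_unitriangular _ (fun γ => MvPowerSeries.coeff γ.1.toFinsupp)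
      coeff_Cqsym_self fun _ _ => coeff_Cqsym_ne_zero,
    span_range_eq_of_unitriangular _ _ Cqsym_sub_mem_span⟩

/-- The canonical quasisymmetric functions `{C_α : α ⊨ n}` form a `ℤ`-basis of `QSymⁿ`, the
`ℤ`-span of the fundamental quasisymmetric functions `{F_α : α ⊨ n}`. -/
theorem canonical_basis (n : ℕ) (hn : 1 ≤ n) :
    LinearIndependent ℤ (fun α : CompN n => Cqsym n α.1) ∧
    Submodule.span ℤ (Set.range fun α : CompN n => Cqsym n α.1) =
      Submodule.span ℤ (Set.range fun α : CompN n => FqsymSet n (compSet α.1)) :=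
  canonical_basis_general n
end

section
/- Let α = (α_1,…,α_k) be a strict reverse partition, i.e., α_1 < α_2 < ⋯ < α_k. Then the number of SRCTs of shape α in which the entries of every column increase from top to bottom (that is, the cardinality of E_α) equals the number of shifted reverse tableaux of shape α. -/
/-- Cell `(r,c)` of the shifted reverse diagram of a strict reverse partition `α`,
where `c` is the absolute column index and row `i` starts one cell to the left of
row `i-1` (the last row starts in column `0`). -/
def ShCell (α : List ℕ) (r c : ℕ) : Prop :=
  r < α.length ∧ α.length - 1 - r ≤ c ∧ c < α.length - 1 - r + α.getD r 0

/-- A shifted reverse tableau of shape `α`: a bijective filling of the shifted reverse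
diagram by `{1,…,α.sum}` with rows decreasing from left to right and columns increasing from
top to bottom. -/
structure ShiftedRT (α : List ℕ) where
  entry : ℕ → ℕ → ℕ
  zero_off : ∀ r c, ¬ ShCell α r c → entry r c = 0
  one_le : ∀ r c, ShCell α r c → 1 ≤ entry r c
  le_sum : ∀ r c, ShCell α r c → entry r c ≤ α.sum
  inj : ∀ r c r' c', ShCell α r c → ShCell α r' c' → entry r c = entry r' c' → r = r' ∧ c = c'
  surj : ∀ m, 1 ≤ m → m ≤ α.sum → ∃ r c, ShCell α r c ∧ entry r c = m
  row_dec : ∀ r c, ShCell α r c → ShCell α r (c + 1) → entry r (c + 1) < entry r c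
  col_inc : ∀ r r' c, r < r' → ShCell α r c → ShCell α r' c → entry r c < entry r' c

section Aux

variable {α : List ℕ}

lemma SRCT.ext' {T T' : SRCT α} (h : T.entry = T'.entry) : T = T' := by
  cases T; cases T'; cases h; rfl

lemma ShiftedRT.ext' {T T' : ShiftedRT α} (h : T.entry = T'.entry) : T = T' := by
  cases T; cases T'; cases h; rfl

lemma gap (hstrict : ∀ i j, i < j → j < α.length → α.getD i 0 < α.getD j 0) :
    ∀ d i, 0 < d → i + d < α.length → α.getD i 0 + d ≤ α.getD (i + d) 0 := by
  intro d
  induction d with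
  | zero => omega
  | succ d ih =>
    intro i _ h
    rcases Nat.eq_zero_or_pos d with rfl | hd
    · simp only [Nat.zero_add] at h ⊢
      have := hstrict i (i + 1) (by omega) h
      omega
    · have h1 := ih i hd (by omega)
      have h2 := hstrict (i + d) (i + d + 1) (by omega) (by omega)
      have e : i + (d + 1) = i + d + 1 := by omega
      rw [e]
      omega

/-- adjacent diagonal increase in a column-increasing SRCT -/
lemma adj_diag (T : SRCT α) (hT : ColIncreasing α T) (r c : ℕ)
    (h1 : IsCell α r c) (h2 : IsCell α (r + 1) (c + 1)) :
    T.entry r c < T.entry (r + 1) (c + 1) := by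
  rcases lt_trichotomy (T.entry r c) (T.entry (r + 1) (c + 1)) with h | h | h
  · exact h
  · exact absurd (T.inj _ _ _ _ h1 h2 h).1 (by omega)
  · obtain ⟨h3, h4⟩ := T.triple r (r + 1) c (by omega) h1 h2 h
    exact absurd (hT r (r + 1) (c + 1) (by omega) h3 h2) (by omega)

lemma diag (hstrict : ∀ i j, i < j → j < α.length → α.getD i 0 < α.getD j 0)
    (T : SRCT α) (hT : ColIncreasing α T) :
    ∀ d r c, IsCell α r c → IsCell α (r + d + 1) (c + d + 1) →
      T.entry r c < T.entry (r + d + 1) (c + d + 1) := by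
  intro d
  induction d with
  | zero => exact fun r c h1 h2 => adj_diag T hT r c h1 h2
  | succ d ih =>
    intro r c h1 h2
    have hr2 : r + (d + 1) + 1 < α.length := h2.1
    have hs := hstrict r (r + 1) (by omega) (by omega)
    have hcell : IsCell α (r + 1) (c + 1) := ⟨by omega, by have := h1.2; omega⟩
    have step1 := adj_diag T hT r c h1 hcell
    have e2 : r + (d + 1) + 1 = (r + 1) + d + 1 := by omega
    have e3 : c + (d + 1) + 1 = (c + 1) + d + 1 := by omega
    rw [e2, e3] at h2 ⊢
    exact lt_trans step1 (ih (r + 1) (c + 1) hcell h2)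

lemma sh_row_mono (S : ShiftedRT α) :
    ∀ d r b, ShCell α r b → ShCell α r (b + d) → S.entry r (b + d) ≤ S.entry r b := by
  intro d
  induction d with
  | zero => exact fun r b _ _ => le_refl _
  | succ d ih =>
    intro r b hb hbd
    have hmid : ShCell α r (b + d) := by
      obtain ⟨h1, h2, h3⟩ := hb; obtain ⟨h1', h2', h3'⟩ := hbd
      exact ⟨h1, by omega, by omega⟩
    have e : b + (d + 1) = (b + d) + 1 := by omega
    rw [e] at hbd ⊢
    exact le_trans (le_of_lt (S.row_dec r (b + d) hmid hbd)) (ih r b hb hmid)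

/-- key lemma: in a shifted RT, going strictly down and weakly left increases entries -/
lemma keyB (hstrict : ∀ i j, i < j → j < α.length → α.getD i 0 < α.getD j 0)
    (S : ShiftedRT α) (r r' a b : ℕ) (hrr : r < r')
    (ha : ShCell α r a) (hb : ShCell α r' b) (hab : b ≤ a) :
    S.entry r a < S.entry r' b := by
  obtain ⟨hr, h1, h2⟩ := ha
  obtain ⟨hr', h1', h2'⟩ := hb
  have hg := gap hstrict (r' - r) r (by omega) (by omega)
  have e : r + (r' - r) = r' := by omega
  rw [e] at hg
  have hra' : ShCell α r' a := ⟨hr', by omega, by omega⟩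
  have step1 := S.col_inc r r' a hrr ⟨hr, h1, h2⟩ hra'
  have e2 : b + (a - b) = a := by omega
  have mono := sh_row_mono S (a - b) r' b ⟨hr', h1', h2'⟩ (by rw [e2]; exact hra')
  rw [e2] at mono
  exact lt_of_lt_of_le step1 mono

lemma cellUnshift {r c : ℕ} (h : ShCell α r c) :
    IsCell α r (c - (α.length - 1 - r)) ∧ α.length - 1 - r ≤ c := by
  obtain ⟨h1, h2, h3⟩ := h
  exact ⟨⟨h1, by omega⟩, h2⟩

lemma cellShift {r c : ℕ} (h : IsCell α r c) :
    ShCell α r (c + (α.length - 1 - r)) := by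
  obtain ⟨h1, h2⟩ := h
  exact ⟨h1, by omega, by omega⟩

/-- forward map: shift row `r` right by `α.length - 1 - r` -/
def fwd (hstrict : ∀ i j, i < j → j < α.length → α.getD i 0 < α.getD j 0)
    (T : SRCT α) (hT : ColIncreasing α T) : ShiftedRT α where
  entry r c := if α.length - 1 - r ≤ c then T.entry r (c - (α.length - 1 - r)) else 0
  zero_off r c h := by
    by_cases hle : α.length - 1 - r ≤ c
    · simp only [if_pos hle]
      apply T.zero_off
      intro hc
      have := cellShift hc
      have e : c - (α.length - 1 - r) + (α.length - 1 - r) = c := by omega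
      rw [e] at this
      exact h this
    · simp only [if_neg hle]
  one_le r c h := by
    obtain ⟨hc, hle⟩ := cellUnshift h
    simp only [if_pos hle]
    exact T.one_le _ _ hc
  le_sum r c h := by
    obtain ⟨hc, hle⟩ := cellUnshift h
    simp only [if_pos hle]
    exact T.le_sum _ _ hc
  inj r c r' c' h h' he := by
    obtain ⟨hc, hle⟩ := cellUnshift h
    obtain ⟨hc', hle'⟩ := cellUnshift h'
    simp only [if_pos hle, if_pos hle'] at he
    obtain ⟨e1, e2⟩ := T.inj _ _ _ _ hc hc' he
    subst e1
    exact ⟨rfl, by omega⟩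
  surj m h1 h2 := by
    obtain ⟨r, c, hc, he⟩ := T.surj m h1 h2
    refine ⟨r, c + (α.length - 1 - r), cellShift hc, ?_⟩
    simp only [if_pos (Nat.le_add_left _ _), Nat.add_sub_cancel]
    exact he
  row_dec r c h h' := by
    obtain ⟨hc, hle⟩ := cellUnshift h
    obtain ⟨hc', hle'⟩ := cellUnshift h'
    simp only [if_pos hle, if_pos hle']
    have e : c + 1 - (α.length - 1 - r) = (c - (α.length - 1 - r)) + 1 := by omega
    rw [e]
    exact T.row_dec _ _ (e ▸ hc')
  col_inc r r' c hrr h h' := by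
    obtain ⟨hc, hle⟩ := cellUnshift h
    obtain ⟨hc', hle'⟩ := cellUnshift h'
    simp only [if_pos hle, if_pos hle']
    have hr'L : r' < α.length := h'.1
    have e2 : r + (r' - r - 1) + 1 = r' := by omega
    have e : c - (α.length - 1 - r) + (r' - r - 1) + 1 = c - (α.length - 1 - r') := by omega
    have key := diag hstrict T hT (r' - r - 1) r (c - (α.length - 1 - r)) hc
      (by rw [e2, e]; exact hc')
    rw [e2, e] at key
    exact key

/-- backward map: shift row `r` left by `α.length - 1 - r` -/
def bwd (hstrict : ∀ i j, i < j → j < α.length → α.getD i 0 < α.getD j 0)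
    (S : ShiftedRT α) : SRCT α where
  entry r c := S.entry r (c + (α.length - 1 - r))
  zero_off r c h := by
    apply S.zero_off
    intro hc
    obtain ⟨hcell, _⟩ := cellUnshift hc
    rw [Nat.add_sub_cancel] at hcell
    exact h hcell
  one_le r c h := S.one_le _ _ (cellShift h)
  le_sum r c h := S.le_sum _ _ (cellShift h)
  inj r c r' c' h h' he := by
    obtain ⟨e1, e2⟩ := S.inj _ _ _ _ (cellShift h) (cellShift h') he
    subst e1
    exact ⟨rfl, by omega⟩
  surj m h1 h2 := by
    obtain ⟨r, c, hc, he⟩ := S.surj m h1 h2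
    obtain ⟨hcell, hle⟩ := cellUnshift hc
    refine ⟨r, c - (α.length - 1 - r), hcell, ?_⟩
    show S.entry r (c - (α.length - 1 - r) + (α.length - 1 - r)) = m
    have e : c - (α.length - 1 - r) + (α.length - 1 - r) = c := by omega
    rw [e]
    exact he
  row_dec r c h := by
    have h0 : IsCell α r c := ⟨h.1, by have := h.2; omega⟩
    show S.entry r (c + 1 + (α.length - 1 - r)) < S.entry r (c + (α.length - 1 - r))
    have e : c + 1 + (α.length - 1 - r) = (c + (α.length - 1 - r)) + 1 := by omega
    rw [e]
    exact S.row_dec _ _ (cellShift h0) (e ▸ cellShift h)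
  col1_inc r r' hrr h h' := by
    exact keyB hstrict S r r' _ _ hrr (cellShift h) (cellShift h')
      (by have := h'.1; omega)
  triple r r' c hrr h h' hlt := by
    exfalso
    have hlt' : S.entry r' (c + 1 + (α.length - 1 - r')) <
        S.entry r (c + (α.length - 1 - r)) := hlt
    have := keyB hstrict S r r' (c + (α.length - 1 - r)) (c + 1 + (α.length - 1 - r')) hrr
      (cellShift h) (cellShift h') (by have := h'.1; omega)
    omega

lemma bwd_colinc (hstrict : ∀ i j, i < j → j < α.length → α.getD i 0 < α.getD j 0)
    (S : ShiftedRT α) : ColIncreasing α (bwd hstrict S) := by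
  intro r r' c hrr h h'
  exact keyB hstrict S r r' _ _ hrr (cellShift h) (cellShift h')
    (by have := h'.1; omega)

end Aux

/-- For a strict reverse partition `α`, the SRCTs of shape `α` with increasing columns are
equinumerous with the shifted reverse tableaux of shape `α`. -/
theorem Ealpha_card_eq_shifted (α : List ℕ) (hpos : ∀ a ∈ α, 0 < a)
    (hstrict : ∀ i j, i < j → j < α.length → α.getD i 0 < α.getD j 0) :
    Nat.card {T : SRCT α // ColIncreasing α T} = Nat.card (ShiftedRT α) := by
  apply Nat.card_congr
  refine
    { toFun := fun T => fwd hstrict T.1 T.2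
      invFun := fun S => ⟨bwd hstrict S, bwd_colinc hstrict S⟩
      left_inv := ?_
      right_inv := ?_ }
  · rintro ⟨T, hT⟩
    apply Subtype.ext
    apply SRCT.ext'
    funext r c
    show (if α.length - 1 - r ≤ c + (α.length - 1 - r) then
        T.entry r (c + (α.length - 1 - r) - (α.length - 1 - r)) else 0) = T.entry r c
    rw [if_pos (Nat.le_add_left _ _), Nat.add_sub_cancel]
  · intro S
    apply ShiftedRT.ext'
    funext r c
    show (if α.length - 1 - r ≤ c then
        S.entry r (c - (α.length - 1 - r) + (α.length - 1 - r)) else 0) = S.entry r c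
    by_cases hle : α.length - 1 - r ≤ c
    · rw [if_pos hle]
      have e : c - (α.length - 1 - r) + (α.length - 1 - r) = c := by omega
      rw [e]
    · rw [if_neg hle]
      symm
      apply S.zero_off
      intro hc
      exact hle hc.2.1
end

section
/- Let k be a positive integer and α = (3^k), the composition consisting of k parts all equal to 3. Then the number of SRCTs of shape α in which the entries of every column increase from top to bottom (that is, the cardinality of E_α) equals 2^{k−1}. -/
namespace EalphaAux

lemma cell_repl {k r c : ℕ} : IsCell (List.replicate k 3) r c ↔ r < k ∧ c < 3 := by
  unfold IsCell
  simp [List.getD]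
  intro h
  simp [List.getElem?_replicate, h]

lemma sum_repl (k : ℕ) : (List.replicate k 3).sum = 3 * k := by
  simp [List.sum_replicate]; ring

/-- explicit entry function determined by choice sequence `f` -/
def ent (k : ℕ) (f : ℕ → Bool) (r c : ℕ) : ℕ :=
  if r < k then
    if c = 0 then (if f r then 3*r+4 else 3*r+3)
    else if c = 1 then 3*r+2
    else if c = 2 then (if r = 0 then 1 else if f (r-1) then 3*r else 3*r+1)
    else 0
  else 0

lemma ent0 {k r : ℕ} (f : ℕ → Bool) (h : r < k) :
    ent k f r 0 = if f r then 3*r+4 else 3*r+3 := by simp [ent, h]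

lemma ent1 {k r : ℕ} (f : ℕ → Bool) (h : r < k) : ent k f r 1 = 3*r+2 := by simp [ent, h]

lemma ent2_zero {k : ℕ} (f : ℕ → Bool) (h : 0 < k) : ent k f 0 2 = 1 := by simp [ent, h]

lemma ent2_succ {k r : ℕ} (f : ℕ → Bool) (h : r + 1 < k) :
    ent k f (r+1) 2 = if f r then 3*r+3 else 3*r+4 := by
  rcases hb : f r with _ | _ <;> simp [ent, h, hb] <;> omega

lemma ent0_lb {k r : ℕ} (f : ℕ → Bool) (h : r < k) : 3*r+3 ≤ ent k f r 0 := by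
  rw [ent0 f h]; split <;> omega

lemma ent0_ub {k r : ℕ} (f : ℕ → Bool) (h : r < k) : ent k f r 0 ≤ 3*r+4 := by
  rw [ent0 f h]; split <;> omega

lemma ent2_lb {k r : ℕ} (f : ℕ → Bool) (h : r < k) (hr : 1 ≤ r) : 3*r ≤ ent k f r 2 := by
  match r, hr with
  | s+1, _ => rw [ent2_succ f h]; split <;> omega

lemma ent2_ub {k r : ℕ} (f : ℕ → Bool) (h : r < k) : ent k f r 2 ≤ 3*r+1 := by
  match r with
  | 0 => simp [ent2_zero f h]
  | s+1 => rw [ent2_succ f h]; split <;> omega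

lemma ent2_lb' {k r : ℕ} (f : ℕ → Bool) (h : r < k) : 1 ≤ ent k f r 2 := by
  match r with
  | 0 => rw [ent2_zero f h]
  | s+1 => have := ent2_lb f h (by omega); omega


/-- inverse: position of value `m` -/
def pos (f : ℕ → Bool) (m : ℕ) : ℕ × ℕ :=
  if m = 1 then (0, 2)
  else if m % 3 = 2 then (m / 3, 1)
  else if m % 3 = 0 then (if f (m / 3 - 1) then (m / 3, 2) else (m / 3 - 1, 0))
  else (if f (m / 3 - 1) then (m / 3 - 1, 0) else (m / 3, 2))

lemma pos_ent {k r c : ℕ} (f : ℕ → Bool) (hr : r < k) (hc : c < 3) :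
    pos f (ent k f r c) = (r, c) := by
  interval_cases c
  · rcases hb : f r with _ | _ <;> rw [ent0 f hr] <;> simp only [hb, if_true, if_false]
    · have h1 : 3*r+3 ≠ 1 := by omega
      have h2 : (3*r+3) % 3 = 0 := by omega
      have h3 : (3*r+3) / 3 = r + 1 := by omega
      simp [pos, h1, h2, h3, hb]
    · have h1 : 3*r+4 ≠ 1 := by omega
      have h2 : (3*r+4) % 3 = 1 := by omega
      have h3 : (3*r+4) / 3 = r + 1 := by omega
      simp [pos, h1, h2, h3, hb]
  · rw [ent1 f hr]
    have h1 : 3*r+2 ≠ 1 := by omega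
    have h2 : (3*r+2) % 3 = 2 := by omega
    have h3 : (3*r+2) / 3 = r := by omega
    simp [pos, h1, h2, h3]
  · match r with
    | 0 => rw [ent2_zero f hr]; simp [pos]
    | s+1 =>
      rcases hb : f s with _ | _ <;> rw [ent2_succ f hr] <;> simp only [hb, if_true, if_false]
      · have h1 : 3*s+4 ≠ 1 := by omega
        have h2 : (3*s+4) % 3 = 1 := by omega
        have h3 : (3*s+4) / 3 = s + 1 := by omega
        simp [pos, h1, h2, h3, hb]
      · have h1 : 3*s+3 ≠ 1 := by omega
        have h2 : (3*s+3) % 3 = 0 := by omega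
        have h3 : (3*s+3) / 3 = s + 1 := by omega
        simp [pos, h1, h2, h3, hb]

lemma ent_pos {k m : ℕ} (f : ℕ → Bool) (hf : ∀ r, k - 1 ≤ r → f r = false)
    (h1 : 1 ≤ m) (h2 : m ≤ 3 * k) :
    (pos f m).1 < k ∧ (pos f m).2 < 3 ∧ ent k f (pos f m).1 (pos f m).2 = m := by
  have hk : 1 ≤ k := by omega
  by_cases hm1 : m = 1
  · subst hm1
    have hpos : pos f 1 = (0, 2) := by simp [pos]
    rw [hpos]
    exact ⟨hk, by omega, ent2_zero f hk⟩
  rcases hmod : m % 3 with _ | _ | t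
  · -- m % 3 = 0, m = 3s, s ≥ 1
    have hs1 : 1 ≤ m / 3 := by omega
    have hsk : m / 3 ≤ k := by omega
    rcases hb : f (m / 3 - 1) with _ | _
    · -- a_{s-1} = 3s, position (s-1, 0)
      have hlt : m / 3 - 1 < k := by omega
      have hpos : pos f m = (m / 3 - 1, 0) := by simp [pos, hm1, hmod, hb]
      rw [hpos]
      refine ⟨hlt, by omega, ?_⟩
      rw [ent0 f hlt, hb]
      simp; omega
    · -- c_s = 3s, position (s, 2); need s < k
      have hsltk : m / 3 < k := by
        by_contra hcon
        have heq : m / 3 = k := by omega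
        have := hf (m / 3 - 1) (by omega)
        rw [this] at hb; exact absurd hb (by simp)
      have hpos : pos f m = (m / 3, 2) := by simp [pos, hm1, hmod, hb]
      rw [hpos]
      refine ⟨hsltk, by omega, ?_⟩
      have heq : m / 3 = (m / 3 - 1) + 1 := by omega
      rw [heq] at hsltk ⊢
      rw [ent2_succ f hsltk, hb]
      simp; omega
  · -- m % 3 = 1, m ≥ 4, s = m/3 ≥ 1
    have hs1 : 1 ≤ m / 3 := by omega
    have hsltk : m / 3 < k := by omega
    rcases hb : f (m / 3 - 1) with _ | _
    · -- c_s = 3s+1, position (s, 2)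
      have hpos : pos f m = (m / 3, 2) := by simp [pos, hm1, hmod, hb]
      rw [hpos]
      refine ⟨hsltk, by omega, ?_⟩
      have heq : m / 3 = (m / 3 - 1) + 1 := by omega
      rw [heq] at hsltk ⊢
      rw [ent2_succ f hsltk, hb]
      simp; omega
    · -- a_{s-1} = 3s+1, position (s-1, 0)
      have hlt : m / 3 - 1 < k := by omega
      have hpos : pos f m = (m / 3 - 1, 0) := by simp [pos, hm1, hmod, hb]
      rw [hpos]
      refine ⟨hlt, by omega, ?_⟩
      rw [ent0 f hlt, hb]
      simp; omega
  · -- m % 3 = 2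
    have ht : t = 0 := by omega
    subst ht
    have hsltk : m / 3 < k := by omega
    have hpos : pos f m = (m / 3, 1) := by simp [pos, hm1, hmod]
    rw [hpos]
    refine ⟨hsltk, by omega, ?_⟩
    rw [ent1 f hsltk]
    omega

def mkSRCT (k : ℕ) (f : ℕ → Bool) (hf : ∀ r, k - 1 ≤ r → f r = false) :
    SRCT (List.replicate k 3) where
  entry := ent k f
  zero_off := fun r c h => by
    rw [cell_repl] at h
    by_cases hr : r < k
    · have hc : ¬ c < 3 := fun hc => h ⟨hr, hc⟩
      simp [ent, hr, show c ≠ 0 by omega, show c ≠ 1 by omega, show c ≠ 2 by omega]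
    · simp [ent, hr]
  one_le := fun r c h => by
    obtain ⟨hr, hc⟩ := cell_repl.mp h
    interval_cases c
    · have := ent0_lb f hr; omega
    · rw [ent1 f hr]; omega
    · exact ent2_lb' f hr
  le_sum := fun r c h => by
    obtain ⟨hr, hc⟩ := cell_repl.mp h
    rw [sum_repl]
    interval_cases c
    · rcases hb : f r with _ | _
      · rw [ent0 f hr, hb]; simp; omega
      · have hrk : r < k - 1 := by
          by_contra hcon
          rw [hf r (by omega)] at hb
          exact absurd hb (by simp)
        rw [ent0 f hr, hb]; simp; omega
    · rw [ent1 f hr]; omega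
    · have := ent2_ub f hr; omega
  inj := fun r c r' c' h h' he => by
    obtain ⟨hr, hc⟩ := cell_repl.mp h
    obtain ⟨hr', hc'⟩ := cell_repl.mp h'
    have h1 := pos_ent f hr hc
    have h2 := pos_ent f hr' hc'
    rw [he, h2] at h1
    have := Prod.ext_iff.mp h1
    exact ⟨this.1.symm, this.2.symm⟩
  surj := fun m hm1 hm2 => by
    rw [sum_repl] at hm2
    obtain ⟨ha, hb, hc⟩ := ent_pos f hf hm1 hm2
    exact ⟨(pos f m).1, (pos f m).2, cell_repl.mpr ⟨ha, hb⟩, hc⟩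
  row_dec := fun r c h => by
    obtain ⟨hr, hc⟩ := cell_repl.mp h
    have hc2 : c < 2 := by omega
    interval_cases c
    · rw [ent1 f hr]; have := ent0_lb f hr; omega
    · show ent k f r 2 < ent k f r 1
      rw [ent1 f hr]; have := ent2_ub f hr; omega
  col1_inc := fun r r' hlt h h' => by
    obtain ⟨hr, -⟩ := cell_repl.mp h
    obtain ⟨hr', -⟩ := cell_repl.mp h'
    have := ent0_ub f hr
    have := ent0_lb f hr'
    omega
  triple := fun r r' c hlt h h' hv => by
    obtain ⟨hr, hc⟩ := cell_repl.mp h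
    obtain ⟨hr', hc'⟩ := cell_repl.mp h'
    exfalso
    have hc2 : c < 2 := by omega
    interval_cases c
    · rw [ent1 f hr'] at hv
      have := ent0_ub f hr
      omega
    · have hv' : ent k f r' 2 < ent k f r 1 := hv
      rw [ent1 f hr] at hv'
      have := ent2_lb f hr' (by omega)
      omega

lemma mk_colinc (k : ℕ) (f : ℕ → Bool) (hf : ∀ r, k - 1 ≤ r → f r = false) :
    ColIncreasing (List.replicate k 3) (mkSRCT k f hf) := by
  intro r r' c hlt h h'
  obtain ⟨hr, hc⟩ := cell_repl.mp h
  obtain ⟨hr', -⟩ := cell_repl.mp h'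
  show ent k f r c < ent k f r' c
  interval_cases c
  · have := ent0_ub f hr; have := ent0_lb f hr'; omega
  · rw [ent1 f hr, ent1 f hr']; omega
  · have := ent2_ub f hr; have := ent2_lb f hr' (by omega); omega

section Unique

variable {k : ℕ} (T : SRCT (List.replicate k 3))

lemma cellk {r c : ℕ} (hr : r < k) (hc : c < 3) : IsCell (List.replicate k 3) r c :=
  cell_repl.mpr ⟨hr, hc⟩

variable (hcol : ColIncreasing (List.replicate k 3) T)

include hcol

lemma stepB {r : ℕ} (hr : r + 1 < k) :
    T.entry r 0 < T.entry (r+1) 1 ∧ T.entry r 1 < T.entry (r+1) 2 := by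
  constructor
  · by_contra hcon
    push_neg at hcon
    have hne : T.entry (r+1) 1 ≠ T.entry r 0 := by
      intro he
      have := T.inj _ _ _ _ (cellk hr (by omega)) (cellk (by omega) (by omega)) he
      omega
    have hlt : T.entry (r+1) 1 < T.entry r 0 := lt_of_le_of_ne hcon hne
    have h1 : T.entry (r+1) 1 < T.entry r 1 :=
      (T.triple r (r+1) 0 (by omega) (cellk (by omega) (by omega)) (cellk hr (by omega)) hlt).2
    have h2 := hcol r (r+1) 1 (by omega) (cellk (by omega) (by omega)) (cellk hr (by omega))
    omega
  · by_contra hcon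
    push_neg at hcon
    have hne : T.entry (r+1) 2 ≠ T.entry r 1 := by
      intro he
      have := T.inj _ _ _ _ (cellk hr (by omega)) (cellk (by omega) (by omega)) he
      omega
    have hlt : T.entry (r+1) 2 < T.entry r 1 := lt_of_le_of_ne hcon hne
    have h1 : T.entry (r+1) 2 < T.entry r 2 :=
      (T.triple r (r+1) 1 (by omega) (cellk (by omega) (by omega)) (cellk hr (by omega)) hlt).2
    have h2 := hcol r (r+1) 2 (by omega) (cellk (by omega) (by omega)) (cellk hr (by omega))
    omega

lemma b_gap {r : ℕ} (hr : r + 1 < k) : T.entry r 1 + 3 ≤ T.entry (r+1) 1 := by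
  have h1 : T.entry r 1 < T.entry r 0 := T.row_dec r 0 (cellk (by omega) (by omega))
  have h2 : T.entry (r+1) 2 < T.entry (r+1) 1 := T.row_dec (r+1) 1 (cellk hr (by omega))
  obtain ⟨h3, h4⟩ := stepB T hcol hr
  have h5 : T.entry r 0 ≠ T.entry (r+1) 2 := by
    intro he
    have := T.inj _ _ _ _ (cellk (by omega) (by omega)) (cellk hr (by omega)) he
    omega
  omega

lemma b_lb : ∀ r, r < k → 3*r + 2 ≤ T.entry r 1 := by
  intro r
  induction r with
  | zero =>
    intro hr
    have h1 : T.entry 0 2 < T.entry 0 1 := T.row_dec 0 1 (cellk hr (by omega))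
    have h2 := T.one_le 0 2 (cellk hr (by omega))
    omega
  | succ n ih =>
    intro hr
    have h1 := ih (by omega)
    have h2 := b_gap T hcol (r := n) hr
    omega

lemma b_ub : ∀ s r, r + s + 1 = k → T.entry r 1 ≤ 3*r + 2 := by
  intro s
  induction s with
  | zero =>
    intro r hrk
    have hr : r < k := by omega
    have h1 : T.entry r 1 < T.entry r 0 := T.row_dec r 0 (cellk hr (by omega))
    have h2 := T.le_sum r 0 (cellk hr (by omega))
    rw [sum_repl] at h2
    omega
  | succ n ih =>
    intro r hrk
    have h1 := ih (r+1) (by omega)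
    have h2 := b_gap T hcol (r := r) (by omega)
    omega

lemma b_eq {r : ℕ} (hr : r < k) : T.entry r 1 = 3*r + 2 :=
  le_antisymm (b_ub T hcol (k - r - 1) r (by omega)) (b_lb T hcol r hr)

lemma a_last (hk : 1 ≤ k) : T.entry (k-1) 0 = 3*k := by
  have h1 := b_eq T hcol (r := k-1) (by omega)
  have h2 : T.entry (k-1) 1 < T.entry (k-1) 0 := T.row_dec (k-1) 0 (cellk (by omega) (by omega))
  have h3 := T.le_sum (k-1) 0 (cellk (by omega) (by omega))
  rw [sum_repl] at h3
  omega

lemma a_range {r : ℕ} (hr : r + 1 < k) :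
    T.entry r 0 = 3*r + 3 ∨ T.entry r 0 = 3*r + 4 := by
  have h1 := b_eq T hcol (r := r) (by omega)
  have h2 := b_eq T hcol (r := r+1) hr
  have h3 : T.entry r 1 < T.entry r 0 := T.row_dec r 0 (cellk (by omega) (by omega))
  have h4 := (stepB T hcol hr).1
  omega

lemma c_zero (hk : 1 ≤ k) : T.entry 0 2 = 1 := by
  have h1 := b_eq T hcol (r := 0) hk
  have h2 : T.entry 0 2 < T.entry 0 1 := T.row_dec 0 1 (cellk hk (by omega))
  have h3 := T.one_le 0 2 (cellk hk (by omega))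
  omega

lemma c_range {r : ℕ} (hr : r + 1 < k) :
    T.entry (r+1) 2 = 3*r + 3 ∨ T.entry (r+1) 2 = 3*r + 4 := by
  have h1 := b_eq T hcol (r := r) (by omega)
  have h2 := b_eq T hcol (r := r+1) hr
  have h3 : T.entry (r+1) 2 < T.entry (r+1) 1 := T.row_dec (r+1) 1 (cellk hr (by omega))
  have h4 := (stepB T hcol hr).2
  omega

omit hcol in
lemma ac_ne {r : ℕ} (hr : r + 1 < k) : T.entry r 0 ≠ T.entry (r+1) 2 := by
  intro he
  have := T.inj _ _ _ _ (cellk (by omega) (by omega)) (cellk hr (by omega)) he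
  omega

end Unique

lemma SRCT.ext' {α : List ℕ} {T1 T2 : SRCT α} (h : T1.entry = T2.entry) : T1 = T2 := by
  cases T1; cases T2; cases h; rfl

/-- extension of a finite choice vector by `false` -/
def extF (k : ℕ) (f : Fin (k-1) → Bool) : ℕ → Bool :=
  fun r => if h : r < k - 1 then f ⟨r, h⟩ else false

lemma extF_hf (k : ℕ) (f : Fin (k-1) → Bool) : ∀ r, k - 1 ≤ r → extF k f r = false := by
  intro r hr
  simp [extF, show ¬ r < k - 1 by omega]

lemma entry_eq {k : ℕ} (hk : 1 ≤ k) (T : SRCT (List.replicate k 3))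
    (hcol : ColIncreasing (List.replicate k 3) T) :
    T.entry = ent k (extF k (fun i => decide (T.entry i 0 = 3*(i:ℕ)+4))) := by
  set E := extF k (fun i : Fin (k-1) => decide (T.entry i 0 = 3*(i:ℕ)+4)) with hE
  funext r c
  by_cases hr : r < k
  · by_cases hc : c < 3
    · interval_cases c
      · -- column 0
        by_cases hrk : r < k - 1
        · have hEr : E r = decide (T.entry r 0 = 3*r+4) := by simp [hE, extF, hrk]
          rw [ent0 E hr, hEr]
          rcases a_range T hcol (r := r) (by omega) with hv | hv <;> rw [hv] <;> simp <;> omega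
        · have hr1 : r = k - 1 := by omega
          have hEr : E r = false := extF_hf k _ r (by omega)
          rw [ent0 E hr, hEr]
          subst hr1
          rw [a_last T hcol hk]
          simp; omega
      · rw [ent1 E hr]; exact b_eq T hcol hr
      · match r with
        | 0 => rw [ent2_zero E hr]; exact c_zero T hcol hk
        | s+1 =>
          have hs : s < k - 1 := by omega
          have hEs : E s = decide (T.entry s 0 = 3*s+4) := by simp [hE, extF, hs]
          rw [ent2_succ E hr, hEs]
          have hne := ac_ne T (r := s) hr
          rcases a_range T hcol (r := s) hr with hv | hv <;>
            rcases c_range T hcol (r := s) hr with hw | hw <;>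
              rw [hw] <;> rw [hv] at hne ⊢ <;> simp <;> omega
    · rw [T.zero_off r c (fun hcell => hc (cell_repl.mp hcell).2)]
      simp [ent, hr, show c ≠ 0 by omega, show c ≠ 1 by omega, show c ≠ 2 by omega]
  · rw [T.zero_off r c (fun hcell => hr (cell_repl.mp hcell).1)]
    simp [ent, hr]

end EalphaAux

/-- For `α = (3^k)`, the number of SRCTs of shape `α` with increasing columns is `2^(k-1)`. -/
theorem Ealpha_three_k_card (k : ℕ) (hk : 1 ≤ k) :
    Nat.card {T : SRCT (List.replicate k 3) // ColIncreasing (List.replicate k 3) T} =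
      2 ^ (k - 1) := by
  classical
  have e : (Fin (k-1) → Bool) ≃
      {T : SRCT (List.replicate k 3) // ColIncreasing (List.replicate k 3) T} :=
    { toFun := fun f => ⟨EalphaAux.mkSRCT k (EalphaAux.extF k f) (EalphaAux.extF_hf k f),
        EalphaAux.mk_colinc k _ _⟩
      invFun := fun T => fun i => decide (T.1.entry i 0 = 3*(i:ℕ)+4)
      left_inv := by
        intro f
        funext i
        have hi := i.isLt
        have hik : (i:ℕ) < k := by omega
        show decide (EalphaAux.ent k (EalphaAux.extF k f) i 0 = 3*(i:ℕ)+4) = f i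
        rw [EalphaAux.ent0 _ hik]
        have hE : EalphaAux.extF k f i = f i := by simp [EalphaAux.extF, hi]
        rw [hE]
        rcases hfi : f i with _ | _ <;> simp [hfi] <;> omega
      right_inv := by
        intro T
        apply Subtype.ext
        apply EalphaAux.SRCT.ext'
        exact (EalphaAux.entry_eq hk T.1 T.2).symm }
  rw [← Nat.card_congr e]
  simp [Nat.card_eq_fintype_card]
end
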